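/- Let η be a Fox pairing on ℤ[π]. Then for all x, y, z ∈ π, one has the identity η(x, [y,z]) = (η(x, y)·(z − 1) − η(x, z)·(y − 1))·y⁻¹·z⁻¹ in ℤ[π], where [y,z] = y·z·y⁻¹·z⁻¹ is the group commutator. -/

import Mathlib

/-- The augmentation homomorphism of the group ring `ℤ[π]`. -/
noncomputable def aug (π : Type*) [Group π] : MonoidAlgebra ℤ π →ₐ[ℤ] ℤ :=
  MonoidAlgebra.lift ℤ ℤ π 1

/-- A Fox pairing on the group ring `ℤ[π]`. -/
structure FoxPairing (π : Type*) [Group π] where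
  toFun : MonoidAlgebra ℤ π →ₗ[ℤ] MonoidAlgebra ℤ π →ₗ[ℤ] MonoidAlgebra ℤ π
  fox_left : ∀ x x' y : MonoidAlgebra ℤ π,
    toFun (x * x') y = x * toFun x' y + aug π x' • toFun x y
  fox_right : ∀ x y y' : MonoidAlgebra ℤ π,
    toFun x (y * y') = toFun x y * y' + aug π y • toFun x y'

open MonoidAlgebra

@[simp]
theorem aug_of (π : Type*) [Group π] (g : π) : aug π (of ℤ π g) = 1 := by
  simp [aug]

namespace FoxPairing

variable {π : Type*} [Group π] (η : FoxPairing π) (x : MonoidAlgebra ℤ π)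

theorem apply_one : η.toFun x 1 = 0 := by
  simpa using η.fox_right x 1 1

theorem apply_of_mul (g h : π) :
    η.toFun x (of ℤ π (g * h)) = η.toFun x (of ℤ π g) * of ℤ π h + η.toFun x (of ℤ π h) := by
  rw [map_mul, fox_right, aug_of, one_smul]

theorem apply_of_inv (g : π) :
    η.toFun x (of ℤ π g⁻¹) = -(η.toFun x (of ℤ π g) * of ℤ π g⁻¹) := by
  have h := η.apply_of_mul x g g⁻¹
  rw [mul_inv_cancel, map_one, apply_one] at h
  exact eq_neg_of_add_eq_zero_right h.symm

end FoxPairing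

/-- For a Fox pairing `η` and `x, y, z ∈ π`,
`η(x, [y,z]) = (η(x,y)·(z-1) - η(x,z)·(y-1))·y⁻¹·z⁻¹` where `[y,z] = yzy⁻¹z⁻¹`. -/
theorem foxPairing_commutator (π : Type*) [Group π] (η : FoxPairing π) (x y z : π) :
    η.toFun (MonoidAlgebra.of ℤ π x) (MonoidAlgebra.of ℤ π (y * z * y⁻¹ * z⁻¹)) =
      (η.toFun (MonoidAlgebra.of ℤ π x) (MonoidAlgebra.of ℤ π y) *
          (MonoidAlgebra.of ℤ π z - 1) -
        η.toFun (MonoidAlgebra.of ℤ π x) (MonoidAlgebra.of ℤ π z) *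
          (MonoidAlgebra.of ℤ π y - 1)) *
        MonoidAlgebra.of ℤ π y⁻¹ * MonoidAlgebra.of ℤ π z⁻¹ := by
  simp only [η.apply_of_mul, η.apply_of_inv, sub_mul, mul_sub, mul_one, neg_mul, mul_assoc,
    ← map_mul, mul_inv_cancel_left]
  abel
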